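/- arXiv:2407.05660 — 3 statements merged into one kernel-verified Lean document; each statement's English description precedes it below -/
import Mathlib

section
/- Let U ⊆ ℂ^n be open and let h = (h_{kℓ̄}) : U → Matrix(n,n,ℂ) be a Hermitian metric on U (smooth, pointwise Hermitian positive definite), with inverse entries h^{kℓ̄} := (h(z)⁻¹)_{ℓk}. Define: the Chern curvature Θ_{ij̄kℓ̄} = −∂_i∂̄_j h_{kℓ̄} + Σ_{p,q} h^{pq̄} (∂̄_j h_{pℓ̄})(∂_i h_{kq̄}); the first and second Chern-Ricci curvatures Θ^{(1)}_{ij̄} = Σ_{k,ℓ} h^{kℓ̄} Θ_{ij̄kℓ̄} and Θ^{(2)}_{ij̄} = Σ_{k,ℓ} h^{kℓ̄} Θ_{kℓ̄ij̄}; the Christoffel symbols Γ_{ik}^p = (1/2)Σ_ℓ h^{pℓ̄}(∂_i h_{kℓ̄} + ∂_k h_{iℓ̄}) and Γ_{j̄k}^p = (1/2)Σ_ℓ h^{pℓ̄}(∂̄_j h_{kℓ̄} − ∂̄_ℓ h_{kj̄}); the first Levi-Civita Ricci curvature 𝔯^{(1)}_{ij̄} = −( ∂̄_j(Σ_k Γ_{ik}^k)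 − ∂_i(Σ_k Γ_{j̄k}^k) ); the torsion T_{ij}^k = Σ_ℓ h^{kℓ̄}(∂_i h_{jℓ̄} − ∂_j h_{iℓ̄}); the trace-pluriclosed tensor S_{ij̄} = Σ_{k,m} h^{km̄}( ∂_k∂̄_j h_{im̄} + ∂_i∂̄_m h_{kj̄} − ∂_i∂̄_j h_{km̄} − ∂_k∂̄_m h_{ij̄} ); and Q_{ij̄} = Σ_{p,q,k,ℓ} h^{pq̄} h_{kℓ̄} T_{ip}^k · conj(T_{jq}^ℓ). Then at every point of U and for all indices i,j one has the identity Θ^{(1)}_{ij̄} + Θ^{(2)}_{ij̄} − 2𝔯^{(1)}_{ij̄} = S_{ij̄} + Q_{ij̄}. -/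
open BigOperators
open scoped ComplexOrder

noncomputable section

/-- The Wirtinger derivative `∂_i f = (1/2)(∂f/∂x^i − √−1 ∂f/∂y^i)` of a function
`f : ℂⁿ → ℂ`, computed from the real Fréchet derivative. -/
def wd {n : ℕ} (i : Fin n) (f : (Fin n → ℂ) → ℂ) (z : Fin n → ℂ) : ℂ :=
  (1 / 2 : ℂ) *
    (fderiv ℝ f z (Pi.single i 1) - Complex.I * fderiv ℝ f z (Pi.single i Complex.I))

/-- The conjugate Wirtinger derivative `∂̄_j f = (1/2)(∂f/∂x^j + √−1 ∂f/∂y^j)`. -/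
def wdbar {n : ℕ} (j : Fin n) (f : (Fin n → ℂ) → ℂ) (z : Fin n → ℂ) : ℂ :=
  (1 / 2 : ℂ) *
    (fderiv ℝ f z (Pi.single j 1) + Complex.I * fderiv ℝ f z (Pi.single j Complex.I))

/-- The `(k,ℓ)` entry `h_{kℓ̄}` of a metric, as a function of the point. -/
def entry {n : ℕ} (h : (Fin n → ℂ) → Matrix (Fin n) (Fin n) ℂ) (k l : Fin n) :
    (Fin n → ℂ) → ℂ :=
  fun z => h z k l

/-- The inverse entries `h^{kℓ̄} := ((h z)⁻¹) ℓ k`. -/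
def hinv {n : ℕ} (h : (Fin n → ℂ) → Matrix (Fin n) (Fin n) ℂ) (z : Fin n → ℂ)
    (k l : Fin n) : ℂ :=
  (h z)⁻¹ l k

/-- The Chern curvature
`Θ_{ij̄kℓ̄} = −∂_i∂̄_j h_{kℓ̄} + Σ_{p,q} h^{pq̄} (∂̄_j h_{pℓ̄})(∂_i h_{kq̄})`. -/
def ChernCurv {n : ℕ} (h : (Fin n → ℂ) → Matrix (Fin n) (Fin n) ℂ)
    (i j k l : Fin n) (z : Fin n → ℂ) : ℂ :=
  - wd i (wdbar j (entry h k l)) z +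
    ∑ p, ∑ q, hinv h z p q * wdbar j (entry h p l) z * wd i (entry h k q) z

/-- The first Chern-Ricci curvature `Θ^{(1)}_{ij̄} = Σ_{k,ℓ} h^{kℓ̄} Θ_{ij̄kℓ̄}`. -/
def Ric1 {n : ℕ} (h : (Fin n → ℂ) → Matrix (Fin n) (Fin n) ℂ)
    (i j : Fin n) (z : Fin n → ℂ) : ℂ :=
  ∑ k, ∑ l, hinv h z k l * ChernCurv h i j k l z

/-- The second Chern-Ricci curvature `Θ^{(2)}_{ij̄} = Σ_{k,ℓ} h^{kℓ̄} Θ_{kℓ̄ij̄}`. -/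
def Ric2 {n : ℕ} (h : (Fin n → ℂ) → Matrix (Fin n) (Fin n) ℂ)
    (i j : Fin n) (z : Fin n → ℂ) : ℂ :=
  ∑ k, ∑ l, hinv h z k l * ChernCurv h k l i j z

/-- The Christoffel symbols `Γ_{ik}^p = (1/2) Σ_ℓ h^{pℓ̄}(∂_i h_{kℓ̄} + ∂_k h_{iℓ̄})`. -/
def Gam {n : ℕ} (h : (Fin n → ℂ) → Matrix (Fin n) (Fin n) ℂ)
    (i k p : Fin n) (z : Fin n → ℂ) : ℂ :=
  (1 / 2 : ℂ) * ∑ l, hinv h z p l * (wd i (entry h k l) z + wd k (entry h i l) z)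

/-- The mixed Christoffel symbols `Γ_{j̄k}^p = (1/2) Σ_ℓ h^{pℓ̄}(∂̄_j h_{kℓ̄} − ∂̄_ℓ h_{kj̄})`. -/
def GamBar {n : ℕ} (h : (Fin n → ℂ) → Matrix (Fin n) (Fin n) ℂ)
    (j k p : Fin n) (z : Fin n → ℂ) : ℂ :=
  (1 / 2 : ℂ) * ∑ l, hinv h z p l * (wdbar j (entry h k l) z - wdbar l (entry h k j) z)

/-- The first Levi-Civita Ricci curvature
`𝔯^{(1)}_{ij̄} = −( ∂̄_j(Σ_k Γ_{ik}^k) − ∂_i(Σ_k Γ_{j̄k}^k) )`. -/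
def LCRic1 {n : ℕ} (h : (Fin n → ℂ) → Matrix (Fin n) (Fin n) ℂ)
    (i j : Fin n) (z : Fin n → ℂ) : ℂ :=
  - (wdbar j (fun w => ∑ k, Gam h i k k w) z - wd i (fun w => ∑ k, GamBar h j k k w) z)

/-- The torsion `T_{ij}^k = Σ_ℓ h^{kℓ̄}(∂_i h_{jℓ̄} − ∂_j h_{iℓ̄})`. -/
def Tors {n : ℕ} (h : (Fin n → ℂ) → Matrix (Fin n) (Fin n) ℂ)
    (i j k : Fin n) (z : Fin n → ℂ) : ℂ :=
  ∑ l, hinv h z k l * (wd i (entry h j l) z - wd j (entry h i l) z)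

/-- The trace-pluriclosed tensor
`S_{ij̄} = Σ_{k,m} h^{km̄}( ∂_k∂̄_j h_{im̄} + ∂_i∂̄_m h_{kj̄} − ∂_i∂̄_j h_{km̄} − ∂_k∂̄_m h_{ij̄} )`,
the coordinate expression of `Λ_ω ∂∂̄ω`. -/
def Spc {n : ℕ} (h : (Fin n → ℂ) → Matrix (Fin n) (Fin n) ℂ)
    (i j : Fin n) (z : Fin n → ℂ) : ℂ :=
  ∑ k, ∑ m, hinv h z k m *
    (wd k (wdbar j (entry h i m)) z + wd i (wdbar m (entry h k j)) z
      - wd i (wdbar j (entry h k m)) z - wd k (wdbar m (entry h i j)) z)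

/-- The torsion quadratic form `Q_{ij̄} = Σ_{p,q,k,ℓ} h^{pq̄} h_{kℓ̄} T_{ip}^k conj(T_{jq}^ℓ)`. -/
def Qtor {n : ℕ} (h : (Fin n → ℂ) → Matrix (Fin n) (Fin n) ℂ)
    (i j : Fin n) (z : Fin n → ℂ) : ℂ :=
  ∑ p, ∑ q, ∑ k, ∑ l, hinv h z p q * h z k l * Tors h i p k z * star (Tors h j q l z)

end


noncomputable section AuxWirtinger
variable {n : ℕ}

/-- directional derivative -/
def dd {n : ℕ} (v : Fin n → ℂ) (f : (Fin n → ℂ) → ℂ) (z : Fin n → ℂ) : ℂ :=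
  fderiv ℝ f z v

lemma dd_congr {v : Fin n → ℂ} {f g : (Fin n → ℂ) → ℂ} {z : Fin n → ℂ}
    (h : f =ᶠ[nhds z] g) : dd v f z = dd v g z := by
  unfold dd; rw [h.fderiv_eq]

lemma dd_const (v : Fin n → ℂ) (c : ℂ) (z : Fin n → ℂ) :
    dd v (fun _ => c) z = 0 := by
  unfold dd; rw [fderiv_fun_const]; simp

lemma dd_add {v : Fin n → ℂ} {f g : (Fin n → ℂ) → ℂ} {z : Fin n → ℂ}
    (hf : DifferentiableAt ℝ f z) (hg : DifferentiableAt ℝ g z) :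
    dd v (fun w => f w + g w) z = dd v f z + dd v g z := by
  unfold dd; rw [fderiv_fun_add hf hg]; simp

lemma dd_sub {v : Fin n → ℂ} {f g : (Fin n → ℂ) → ℂ} {z : Fin n → ℂ}
    (hf : DifferentiableAt ℝ f z) (hg : DifferentiableAt ℝ g z) :
    dd v (fun w => f w - g w) z = dd v f z - dd v g z := by
  unfold dd; rw [fderiv_fun_sub hf hg]; simp

lemma dd_mul {v : Fin n → ℂ} {f g : (Fin n → ℂ) → ℂ} {z : Fin n → ℂ}
    (hf : DifferentiableAt ℝ f z) (hg : DifferentiableAt ℝ g z) :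
    dd v (fun w => f w * g w) z = dd v f z * g z + f z * dd v g z := by
  unfold dd; rw [fderiv_fun_mul hf hg]; simp [smul_eq_mul]; ring

lemma dd_sum {v : Fin n → ℂ} {s : Finset (Fin n)} {f : Fin n → (Fin n → ℂ) → ℂ}
    {z : Fin n → ℂ} (hf : ∀ k ∈ s, DifferentiableAt ℝ (f k) z) :
    dd v (fun w => ∑ k ∈ s, f k w) z = ∑ k ∈ s, dd v (f k) z := by
  unfold dd; rw [fderiv_fun_sum hf]; simp

lemma dd_const_mul {v : Fin n → ℂ} {f : (Fin n → ℂ) → ℂ} {z : Fin n → ℂ} (c : ℂ)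
    (hf : DifferentiableAt ℝ f z) :
    dd v (fun w => c * f w) z = c * dd v f z := by
  unfold dd; rw [fderiv_const_mul hf]; simp

lemma dd_conj {v : Fin n → ℂ} (f : (Fin n → ℂ) → ℂ) (z : Fin n → ℂ) :
    dd v (fun w => (starRingEnd ℂ) (f w)) z = (starRingEnd ℂ) (dd v f z) := by
  unfold dd
  by_cases hf : DifferentiableAt ℝ f z
  · have h1 : HasFDerivAt (fun w => (starRingEnd ℂ) (f w))
        ((Complex.conjCLE.toContinuousLinearMap).comp (fderiv ℝ f z)) z :=
      (Complex.conjCLE.toContinuousLinearMap.hasFDerivAt).comp z hf.hasFDerivAt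
    rw [h1.fderiv]; rfl
  · have hf2 : ¬ DifferentiableAt ℝ (fun w => (starRingEnd ℂ) (f w)) z := by
      intro hc
      apply hf
      have : f = fun w => (starRingEnd ℂ) ((starRingEnd ℂ) (f w)) := by
        funext w; simp
      rw [this]
      exact (Complex.conjCLE.toContinuousLinearMap.hasFDerivAt).comp z hc.hasFDerivAt
        |>.differentiableAt
    rw [fderiv_zero_of_not_differentiableAt hf, fderiv_zero_of_not_differentiableAt hf2]
    simp

lemma contDiffOn_dd {v : Fin n → ℂ} {f : (Fin n → ℂ) → ℂ} {U : Set (Fin n → ℂ)}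
    (hU : IsOpen U) (hf : ContDiffOn ℝ (⊤ : ℕ∞) f U) :
    ContDiffOn ℝ (⊤ : ℕ∞) (dd v f) U := by
  have h1 : ContDiffOn ℝ (⊤ : ℕ∞) (fderiv ℝ f) U :=
    hf.fderiv_of_isOpen hU (by simp)
  exact (ContinuousLinearMap.apply ℝ ℂ v).contDiff.comp_contDiffOn h1

lemma dd_dd_symm {f : (Fin n → ℂ) → ℂ} {U : Set (Fin n → ℂ)} {z : Fin n → ℂ}
    (hU : IsOpen U) (hz : z ∈ U) (hf : ContDiffOn ℝ (⊤ : ℕ∞) f U)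
    (v w : Fin n → ℂ) :
    dd v (dd w f) z = dd w (dd v f) z := by
  have hF : DifferentiableAt ℝ (fderiv ℝ f) z := by
    have := (hf.fderiv_of_isOpen hU (by simp) : ContDiffOn ℝ (⊤ : ℕ∞) (fderiv ℝ f) U)
    exact (this.contDiffAt (hU.mem_nhds hz)).differentiableAt (by simp)
  have key : ∀ a b : Fin n → ℂ, dd a (dd b f) z = fderiv ℝ (fderiv ℝ f) z a b := by
    intro a b
    unfold dd
    rw [fderiv_clm_apply hF (differentiableAt_const b)]
    simp
  rw [key, key]
  have hsym : IsSymmSndFDerivAt ℝ f z :=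
    (hf.contDiffAt (hU.mem_nhds hz)).isSymmSndFDerivAt (by
      simp
      rw [show ((2 : WithTop ℕ∞)) = ((2:ℕ∞) : WithTop ℕ∞) by rfl]
      exact WithTop.coe_le_coe.2 (le_top : (2:ℕ∞) ≤ ⊤))
  exact hsym v w

lemma wd_eq_dd (i : Fin n) (f : (Fin n → ℂ) → ℂ) (z : Fin n → ℂ) :
    wd i f z = (1 / 2 : ℂ) *
      (dd (Pi.single i 1) f z - Complex.I * dd (Pi.single i Complex.I) f z) := rfl

lemma wdbar_eq_dd (j : Fin n) (f : (Fin n → ℂ) → ℂ) (z : Fin n → ℂ) :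
    wdbar j f z = (1 / 2 : ℂ) *
      (dd (Pi.single j 1) f z + Complex.I * dd (Pi.single j Complex.I) f z) := rfl

lemma wd_congr {i : Fin n} {f g : (Fin n → ℂ) → ℂ} {z : Fin n → ℂ}
    (h : f =ᶠ[nhds z] g) : wd i f z = wd i g z := by
  simp only [wd_eq_dd, dd_congr h]

lemma wdbar_congr {j : Fin n} {f g : (Fin n → ℂ) → ℂ} {z : Fin n → ℂ}
    (h : f =ᶠ[nhds z] g) : wdbar j f z = wdbar j g z := by
  simp only [wdbar_eq_dd, dd_congr h]

lemma wd_const (i : Fin n) (c : ℂ) (z : Fin n → ℂ) : wd i (fun _ => c) z = 0 := by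
  simp [wd_eq_dd, dd_const]

lemma wdbar_const (j : Fin n) (c : ℂ) (z : Fin n → ℂ) : wdbar j (fun _ => c) z = 0 := by
  simp [wdbar_eq_dd, dd_const]

lemma wd_add {i : Fin n} {f g : (Fin n → ℂ) → ℂ} {z : Fin n → ℂ}
    (hf : DifferentiableAt ℝ f z) (hg : DifferentiableAt ℝ g z) :
    wd i (fun w => f w + g w) z = wd i f z + wd i g z := by
  simp only [wd_eq_dd, dd_add hf hg]; ring

lemma wdbar_add {j : Fin n} {f g : (Fin n → ℂ) → ℂ} {z : Fin n → ℂ}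
    (hf : DifferentiableAt ℝ f z) (hg : DifferentiableAt ℝ g z) :
    wdbar j (fun w => f w + g w) z = wdbar j f z + wdbar j g z := by
  simp only [wdbar_eq_dd, dd_add hf hg]; ring

lemma wd_sub {i : Fin n} {f g : (Fin n → ℂ) → ℂ} {z : Fin n → ℂ}
    (hf : DifferentiableAt ℝ f z) (hg : DifferentiableAt ℝ g z) :
    wd i (fun w => f w - g w) z = wd i f z - wd i g z := by
  simp only [wd_eq_dd, dd_sub hf hg]; ring

lemma wdbar_sub {j : Fin n} {f g : (Fin n → ℂ) → ℂ} {z : Fin n → ℂ}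
    (hf : DifferentiableAt ℝ f z) (hg : DifferentiableAt ℝ g z) :
    wdbar j (fun w => f w - g w) z = wdbar j f z - wdbar j g z := by
  simp only [wdbar_eq_dd, dd_sub hf hg]; ring

lemma wd_mul {i : Fin n} {f g : (Fin n → ℂ) → ℂ} {z : Fin n → ℂ}
    (hf : DifferentiableAt ℝ f z) (hg : DifferentiableAt ℝ g z) :
    wd i (fun w => f w * g w) z = wd i f z * g z + f z * wd i g z := by
  simp only [wd_eq_dd, dd_mul hf hg]; ring

lemma wdbar_mul {j : Fin n} {f g : (Fin n → ℂ) → ℂ} {z : Fin n → ℂ}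
    (hf : DifferentiableAt ℝ f z) (hg : DifferentiableAt ℝ g z) :
    wdbar j (fun w => f w * g w) z = wdbar j f z * g z + f z * wdbar j g z := by
  simp only [wdbar_eq_dd, dd_mul hf hg]; ring

lemma wd_sum {i : Fin n} {s : Finset (Fin n)} {f : Fin n → (Fin n → ℂ) → ℂ}
    {z : Fin n → ℂ} (hf : ∀ k ∈ s, DifferentiableAt ℝ (f k) z) :
    wd i (fun w => ∑ k ∈ s, f k w) z = ∑ k ∈ s, wd i (f k) z := by
  simp only [wd_eq_dd, dd_sum hf, mul_sub, Finset.mul_sum, Finset.sum_sub_distrib]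

lemma wdbar_sum {j : Fin n} {s : Finset (Fin n)} {f : Fin n → (Fin n → ℂ) → ℂ}
    {z : Fin n → ℂ} (hf : ∀ k ∈ s, DifferentiableAt ℝ (f k) z) :
    wdbar j (fun w => ∑ k ∈ s, f k w) z = ∑ k ∈ s, wdbar j (f k) z := by
  simp only [wdbar_eq_dd, dd_sum hf, mul_add, Finset.mul_sum, Finset.sum_add_distrib]

lemma wd_const_mul {i : Fin n} {f : (Fin n → ℂ) → ℂ} {z : Fin n → ℂ} (c : ℂ)
    (hf : DifferentiableAt ℝ f z) :
    wd i (fun w => c * f w) z = c * wd i f z := by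
  simp only [wd_eq_dd, dd_const_mul c hf]; ring

lemma wdbar_const_mul {j : Fin n} {f : (Fin n → ℂ) → ℂ} {z : Fin n → ℂ} (c : ℂ)
    (hf : DifferentiableAt ℝ f z) :
    wdbar j (fun w => c * f w) z = c * wdbar j f z := by
  simp only [wdbar_eq_dd, dd_const_mul c hf]; ring

lemma wdbar_conj {j : Fin n} (f : (Fin n → ℂ) → ℂ) (z : Fin n → ℂ) :
    wdbar j (fun w => (starRingEnd ℂ) (f w)) z = (starRingEnd ℂ) (wd j f z) := by
  simp only [wdbar_eq_dd, wd_eq_dd, dd_conj, map_mul, map_sub, Complex.conj_I, map_one,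
    map_ofNat, map_div₀]
  ring

lemma contDiffOn_wd {i : Fin n} {f : (Fin n → ℂ) → ℂ} {U : Set (Fin n → ℂ)}
    (hU : IsOpen U) (hf : ContDiffOn ℝ (⊤ : ℕ∞) f U) :
    ContDiffOn ℝ (⊤ : ℕ∞) (wd i f) U := by
  have h1 := contDiffOn_dd (v := Pi.single i 1) hU hf
  have h2 := contDiffOn_dd (v := Pi.single i Complex.I) hU hf
  have : wd i f = fun z => (1 / 2 : ℂ) *
      (dd (Pi.single i 1) f z - Complex.I * dd (Pi.single i Complex.I) f z) := rfl
  rw [this]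
  exact contDiffOn_const.mul (h1.sub (contDiffOn_const.mul h2))

lemma contDiffOn_wdbar {j : Fin n} {f : (Fin n → ℂ) → ℂ} {U : Set (Fin n → ℂ)}
    (hU : IsOpen U) (hf : ContDiffOn ℝ (⊤ : ℕ∞) f U) :
    ContDiffOn ℝ (⊤ : ℕ∞) (wdbar j f) U := by
  have h1 := contDiffOn_dd (v := Pi.single j 1) hU hf
  have h2 := contDiffOn_dd (v := Pi.single j Complex.I) hU hf
  have : wdbar j f = fun z => (1 / 2 : ℂ) *
      (dd (Pi.single j 1) f z + Complex.I * dd (Pi.single j Complex.I) f z) := rfl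
  rw [this]
  exact contDiffOn_const.mul (h1.add (contDiffOn_const.mul h2))

lemma wd_wdbar_comm {i j : Fin n} {f : (Fin n → ℂ) → ℂ} {U : Set (Fin n → ℂ)}
    {z : Fin n → ℂ} (hU : IsOpen U) (hz : z ∈ U) (hf : ContDiffOn ℝ (⊤ : ℕ∞) f U) :
    wdbar j (wd i f) z = wd i (wdbar j f) z := by
  have hdiff : ∀ v : Fin n → ℂ, DifferentiableAt ℝ (dd v f) z := fun v =>
    ((contDiffOn_dd hU hf).contDiffAt (hU.mem_nhds hz)).differentiableAt (by simp)
  have hddI : ∀ v v' : Fin n → ℂ,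
      DifferentiableAt ℝ (fun w => Complex.I * dd v' f w) z := fun v v' =>
    (differentiableAt_const _).mul (hdiff v')
  have expand : ∀ (v a b : Fin n → ℂ),
      dd v (fun w => (1 / 2 : ℂ) * (dd a f w - Complex.I * dd b f w)) z
        = (1 / 2 : ℂ) * (dd v (dd a f) z - Complex.I * dd v (dd b f) z) := by
    intro v a b
    rw [dd_const_mul _ ((hdiff a).fun_sub (hddI v b)),
      dd_sub (hdiff a) (hddI v b), dd_const_mul _ (hdiff b)]
  have expand' : ∀ (v a b : Fin n → ℂ),
      dd v (fun w => (1 / 2 : ℂ) * (dd a f w + Complex.I * dd b f w)) z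
        = (1 / 2 : ℂ) * (dd v (dd a f) z + Complex.I * dd v (dd b f) z) := by
    intro v a b
    rw [dd_const_mul _ ((hdiff a).fun_add (hddI v b)),
      dd_add (hdiff a) (hddI v b), dd_const_mul _ (hdiff b)]
  have h1 : wd i f = fun w => (1 / 2 : ℂ) *
      (dd (Pi.single i 1) f w - Complex.I * dd (Pi.single i Complex.I) f w) := rfl
  have h2 : wdbar j f = fun w => (1 / 2 : ℂ) *
      (dd (Pi.single j 1) f w + Complex.I * dd (Pi.single j Complex.I) f w) := rfl
  rw [wdbar_eq_dd, wd_eq_dd, h1, h2, expand, expand, expand', expand']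
  rw [dd_dd_symm hU hz hf (Pi.single j 1) (Pi.single i 1),
    dd_dd_symm hU hz hf (Pi.single j 1) (Pi.single i Complex.I),
    dd_dd_symm hU hz hf (Pi.single j Complex.I) (Pi.single i 1),
    dd_dd_symm hU hz hf (Pi.single j Complex.I) (Pi.single i Complex.I)]
  ring


section MetricLemmas
variable {n : ℕ} {h : (Fin n → ℂ) → Matrix (Fin n) (Fin n) ℂ} {U : Set (Fin n → ℂ)}
  {z : Fin n → ℂ}

lemma contDiffOn_det {M : (Fin n → ℂ) → Matrix (Fin n) (Fin n) ℂ}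
    (hM : ∀ a b, ContDiffOn ℝ (⊤ : ℕ∞) (fun w => M w a b) U) :
    ContDiffOn ℝ (⊤ : ℕ∞) (fun w => (M w).det) U := by
  have : (fun w => (M w).det) = fun w =>
      ∑ σ : Equiv.Perm (Fin n), ((Equiv.Perm.sign σ : ℤ) : ℂ) * ∏ i, M w (σ i) i := by
    funext w; rw [Matrix.det_apply']
  rw [this]
  refine ContDiffOn.sum fun σ _ => contDiffOn_const.mul ?_
  exact contDiffOn_prod fun a _ => hM _ _

lemma contDiffOn_hinv (hU : IsOpen U)
    (hsmooth : ∀ k l : Fin n, ContDiffOn ℝ (⊤ : ℕ∞) (entry h k l) U)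
    (hpd : ∀ z ∈ U, (h z).PosDef) (p q : Fin n) :
    ContDiffOn ℝ (⊤ : ℕ∞) (fun w => hinv h w p q) U := by
  have hdet : ContDiffOn ℝ (⊤ : ℕ∞) (fun w => (h w).det) U := contDiffOn_det hsmooth
  have hdetne : ∀ w ∈ U, (h w).det ≠ 0 := fun w hw => (hpd w hw).det_pos.ne'
  have hadj : ContDiffOn ℝ (⊤ : ℕ∞) (fun w => (h w).adjugate q p) U := by
    have e : (fun w => (h w).adjugate q p)
        = fun w => ((h w).updateRow p (Pi.single q 1)).det := by
      funext w; rw [Matrix.adjugate_apply]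
    rw [e]
    refine contDiffOn_det fun a b => ?_
    by_cases hab : a = p
    · subst hab
      have : (fun w => ((h w).updateRow a (Pi.single q 1)) a b)
          = fun _ => (Pi.single q 1 : Fin n → ℂ) b := by
        funext w; simp [Matrix.updateRow_apply]
      rw [this]; exact contDiffOn_const
    · have : (fun w => ((h w).updateRow p (Pi.single q 1)) a b) = fun w => h w a b := by
        funext w; simp [Matrix.updateRow_apply, hab]
      rw [this]; exact hsmooth a b
  refine ((hdet.inv hdetne).mul hadj).congr fun w hw => ?_
  simp [hinv, Matrix.inv_def, Ring.inverse_eq_inv, Matrix.smul_apply, smul_eq_mul]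

lemma entry_hinv_sum (hpd : ∀ z ∈ U, (h z).PosDef) (hz : z ∈ U) (k m : Fin n) :
    ∑ l, entry h k l z * hinv h z m l = if k = m then 1 else 0 := by
  have h1 := Matrix.mul_nonsing_inv (h z) (hpd z hz).det_pos.ne'.isUnit
  have h2 := congrFun (congrFun h1 k) m
  simpa [Matrix.mul_apply, Matrix.one_apply, entry, hinv] using h2

lemma hinv_entry_sum (hpd : ∀ z ∈ U, (h z).PosDef) (hz : z ∈ U) (p q : Fin n) :
    ∑ k, hinv h z k p * entry h k q z = if p = q then 1 else 0 := by
  have h1 := Matrix.nonsing_inv_mul (h z) (hpd z hz).det_pos.ne'.isUnit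
  have h2 := congrFun (congrFun h1 p) q
  simpa [Matrix.mul_apply, Matrix.one_apply, entry, hinv] using h2

lemma entry_conj (hpd : ∀ z ∈ U, (h z).PosDef) (hw : z ∈ U) (k l : Fin n) :
    entry h k l z = (starRingEnd ℂ) (entry h l k z) := by
  have := (hpd z hw).isHermitian
  have h2 := congrFun (congrFun this k) l
  simp only [Matrix.conjTranspose_apply] at h2
  simp [entry, ← h2]

lemma hinv_conj (hpd : ∀ z ∈ U, (h z).PosDef) (hz : z ∈ U) (k l : Fin n) :
    hinv h z k l = (starRingEnd ℂ) (hinv h z l k) := by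
  have := (hpd z hz).isHermitian.inv
  have h2 := congrFun (congrFun this l) k
  simp only [Matrix.conjTranspose_apply] at h2
  simp [hinv, ← h2]

end MetricLemmas


section DerivHinv
variable {n : ℕ} {h : (Fin n → ℂ) → Matrix (Fin n) (Fin n) ℂ} {U : Set (Fin n → ℂ)}
  {z : Fin n → ℂ}

lemma deriv_hinv_general (hU : IsOpen U) (hz : z ∈ U)
    (hsmooth : ∀ k l : Fin n, ContDiffOn ℝ (⊤ : ℕ∞) (entry h k l) U)
    (hpd : ∀ z ∈ U, (h z).PosDef)
    (D : ((Fin n → ℂ) → ℂ) → ℂ)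
    (Dcongr : ∀ {f g : (Fin n → ℂ) → ℂ}, (f =ᶠ[nhds z] g) → D f = D g)
    (Dconst : ∀ c : ℂ, D (fun _ => c) = 0)
    (Dsum : ∀ f : Fin n → (Fin n → ℂ) → ℂ, (∀ k ∈ Finset.univ, DifferentiableAt ℝ (f k) z) →
      D (fun w => ∑ k, f k w) = ∑ k, D (f k))
    (Dmul : ∀ f g : (Fin n → ℂ) → ℂ, DifferentiableAt ℝ f z → DifferentiableAt ℝ g z →
      D (fun w => f w * g w) = D f * g z + f z * D g)
    (m p : Fin n) :
    D (fun w => hinv h w m p) =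
      - ∑ k, ∑ l, hinv h z k p * D (entry h k l) * hinv h z m l := by
  have hdiffA : ∀ a b : Fin n, DifferentiableAt ℝ (entry h a b) z := fun a b =>
    ((hsmooth a b).contDiffAt (hU.mem_nhds hz)).differentiableAt (by simp)
  have hdiffB : ∀ a b : Fin n, DifferentiableAt ℝ (fun w => hinv h w a b) z := fun a b =>
    (((contDiffOn_hinv hU hsmooth hpd a b)).contDiffAt (hU.mem_nhds hz)).differentiableAt
      (by simp)
  -- For each k : derivative of ∑_l A_{kl} B(m,l) vanishes
  have key : ∀ k : Fin n,
      ∑ l, (D (entry h k l) * hinv h z m l + entry h k l z * D (fun w => hinv h w m l)) = 0 := by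
    intro k
    have e0 : D (fun w => ∑ l, entry h k l w * hinv h w m l) = 0 := by
      have hev : (fun w => ∑ l, entry h k l w * hinv h w m l)
          =ᶠ[nhds z] (fun _ => if k = m then (1:ℂ) else 0) := by
        filter_upwards [hU.mem_nhds hz] with w hw
        exact entry_hinv_sum hpd hw k m
      rw [Dcongr hev, Dconst]
    rw [Dsum (fun l => fun w => entry h k l w * hinv h w m l)
      (fun l _ => (hdiffA k l).mul (hdiffB m l))] at e0
    calc ∑ l, (D (entry h k l) * hinv h z m l + entry h k l z * D (fun w => hinv h w m l))
        = ∑ l, D (fun w => entry h k l w * hinv h w m l) := by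
          refine Finset.sum_congr rfl fun l _ => ?_
          rw [Dmul _ _ (hdiffA k l) (hdiffB m l)]
      _ = 0 := e0
  -- multiply by hinv · k p and sum over k
  have key2 : ∑ k, hinv h z k p *
      (∑ l, (D (entry h k l) * hinv h z m l + entry h k l z * D (fun w => hinv h w m l))) = 0 := by
    simp [key]
  set T : Fin n → ℂ := fun l => D (fun w => hinv h w m l) with hT
  have e1 : ∑ k, ∑ l, hinv h z k p * (D (entry h k l) * hinv h z m l)
      + ∑ k, ∑ l, hinv h z k p * (entry h k l z * T l) = 0 := by
    refine Eq.trans ?_ key2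
    rw [← Finset.sum_add_distrib]
    refine Finset.sum_congr rfl fun k _ => ?_
    rw [Finset.mul_sum, ← Finset.sum_add_distrib]
    refine Finset.sum_congr rfl fun l _ => ?_
    ring
  have e2 : ∑ k, ∑ l, hinv h z k p * (entry h k l z * T l) = T p := by
    rw [Finset.sum_comm]
    have e21 : ∀ l : Fin n, ∑ k, hinv h z k p * (entry h k l z * T l)
        = (∑ k, hinv h z k p * entry h k l z) * T l := by
      intro l; rw [Finset.sum_mul]
      exact Finset.sum_congr rfl fun k _ => by ring
    simp only [e21, hinv_entry_sum hpd hz, ite_mul, one_mul, zero_mul]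
    simp
  have e3 : ∑ k, ∑ l, hinv h z k p * (D (entry h k l) * hinv h z m l)
      = ∑ k, ∑ l, hinv h z k p * D (entry h k l) * hinv h z m l := by
    refine Finset.sum_congr rfl fun k _ => Finset.sum_congr rfl fun l _ => by ring
  have : T p = - ∑ k, ∑ l, hinv h z k p * D (entry h k l) * hinv h z m l := by
    rw [← e3]; linear_combination e1 - e2
  exact this

end DerivHinv


section Sum4
variable {α : Type*} [Fintype α]

lemma sum4_flatten (H : α × α × α × α → ℂ) :
    ∑ a, ∑ b, ∑ c, ∑ d, H (a, b, c, d) = ∑ x, H x := by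
  simp only [Fintype.sum_prod_type]

lemma sum4_perm_eq (F G : α → α → α → α → ℂ) (e : (α × α × α × α) ≃ (α × α × α × α))
    (hFG : ∀ a b c d, G a b c d = F (e (a, b, c, d)).1 (e (a, b, c, d)).2.1
      (e (a, b, c, d)).2.2.1 (e (a, b, c, d)).2.2.2) :
    ∑ a, ∑ b, ∑ c, ∑ d, G a b c d = ∑ a, ∑ b, ∑ c, ∑ d, F a b c d := by
  calc ∑ a, ∑ b, ∑ c, ∑ d, G a b c d
      = ∑ a, ∑ b, ∑ c, ∑ d, F (e (a, b, c, d)).1 (e (a, b, c, d)).2.1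
          (e (a, b, c, d)).2.2.1 (e (a, b, c, d)).2.2.2 := by simp only [hFG]
    _ = ∑ x : α × α × α × α, F (e x).1 (e x).2.1 (e x).2.2.1 (e x).2.2.2 :=
        sum4_flatten (fun x => F (e x).1 (e x).2.1 (e x).2.2.1 (e x).2.2.2)
    _ = ∑ x : α × α × α × α, F x.1 x.2.1 x.2.2.1 x.2.2.2 :=
        Equiv.sum_comp e (fun x => F x.1 x.2.1 x.2.2.1 x.2.2.2)
    _ = ∑ a, ∑ b, ∑ c, ∑ d, F a b c d :=
        (sum4_flatten (fun x => F x.1 x.2.1 x.2.2.1 x.2.2.2)).symm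

def eA {α : Type*} : (α × α × α × α) ≃ (α × α × α × α) where
  toFun x := (x.1, x.2.1, x.2.2.2, x.2.2.1)
  invFun x := (x.1, x.2.1, x.2.2.2, x.2.2.1)
  left_inv := by rintro ⟨a, b, c, d⟩; rfl
  right_inv := by rintro ⟨a, b, c, d⟩; rfl

def eB {α : Type*} : (α × α × α × α) ≃ (α × α × α × α) where
  toFun x := (x.1, x.2.2.2, x.2.1, x.2.2.1)
  invFun x := (x.1, x.2.2.1, x.2.2.2, x.2.1)
  left_inv := by rintro ⟨a, b, c, d⟩; rfl
  right_inv := by rintro ⟨a, b, c, d⟩; rfl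

def eC {α : Type*} : (α × α × α × α) ≃ (α × α × α × α) where
  toFun x := (x.2.2.1, x.2.1, x.2.2.2, x.1)
  invFun x := (x.2.2.2, x.2.1, x.1, x.2.2.1)
  left_inv := by rintro ⟨a, b, c, d⟩; rfl
  right_inv := by rintro ⟨a, b, c, d⟩; rfl

end Sum4

section Collapse
variable {n : ℕ} {h : (Fin n → ℂ) → Matrix (Fin n) (Fin n) ℂ} {U : Set (Fin n → ℂ)}
  {z : Fin n → ℂ}

lemma collapse_k (hpd : ∀ z ∈ U, (h z).PosDef) (hz : z ∈ U) (X : Fin n → ℂ) (l : Fin n) :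
    ∑ k, entry h k l z * (∑ m, hinv h z k m * X m) = X l := by
  have step : ∀ k, entry h k l z * (∑ m, hinv h z k m * X m)
      = ∑ m, hinv h z k m * entry h k l z * X m := by
    intro k
    rw [Finset.mul_sum]
    exact Finset.sum_congr rfl fun m _ => by ring
  simp only [step]
  rw [Finset.sum_comm]
  have step2 : ∀ m, ∑ k, hinv h z k m * entry h k l z * X m
      = (∑ k, hinv h z k m * entry h k l z) * X m := by
    intro m; rw [Finset.sum_mul]
  simp only [step2, hinv_entry_sum hpd hz, ite_mul, one_mul, zero_mul]
  simp
end Collapse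

end AuxWirtinger

/-- For a smooth Hermitian metric `h` on an open set `U ⊆ ℂⁿ`, the identity
`Θ^{(1)}_{ij̄} + Θ^{(2)}_{ij̄} − 2𝔯^{(1)}_{ij̄} = S_{ij̄} + Q_{ij̄}` holds at every point of `U`. -/
theorem curvature_combination_identity {n : ℕ}
    (U : Set (Fin n → ℂ)) (hU : IsOpen U)
    (h : (Fin n → ℂ) → Matrix (Fin n) (Fin n) ℂ)
    (hsmooth : ∀ k l : Fin n, ContDiffOn ℝ (⊤ : ℕ∞) (entry h k l) U)
    (hpd : ∀ z ∈ U, (h z).PosDef) :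
    ∀ z ∈ U, ∀ i j : Fin n,
      Ric1 h i j z + Ric2 h i j z - 2 * LCRic1 h i j z = Spc h i j z + Qtor h i j z := by
  intro z hz i j
  have hsm : ∀ k l : Fin n, ContDiffOn ℝ (⊤ : ℕ∞) (entry h k l) U := fun k l =>
    (hsmooth k l).of_le (by simp)
  have hnz := hU.mem_nhds hz
  -- differentiability pack
  have dA : ∀ a b : Fin n, DifferentiableAt ℝ (entry h a b) z := fun a b =>
    ((hsm a b).contDiffAt hnz).differentiableAt (by simp)
  have dB : ∀ a b : Fin n, DifferentiableAt ℝ (fun w => hinv h w a b) z := fun a b =>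
    ((contDiffOn_hinv hU hsm hpd a b).contDiffAt hnz).differentiableAt (by simp)
  have dwd : ∀ i0 a b : Fin n, DifferentiableAt ℝ (wd i0 (entry h a b)) z := fun i0 a b =>
    ((contDiffOn_wd hU (hsm a b)).contDiffAt hnz).differentiableAt (by simp)
  have dwdbar : ∀ j0 a b : Fin n, DifferentiableAt ℝ (wdbar j0 (entry h a b)) z := fun j0 a b =>
    ((contDiffOn_wdbar hU (hsm a b)).contDiffAt hnz).differentiableAt (by simp)
  -- derivative of the inverse metric
  have wdH : ∀ i0 m p : Fin n, wd i0 (fun w => hinv h w m p) z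
      = - ∑ k, ∑ l, hinv h z k p * wd i0 (entry h k l) z * hinv h z m l := fun i0 m p =>
    deriv_hinv_general hU hz hsm hpd (fun f => wd i0 f z) (fun hfg => wd_congr hfg)
      (fun c => wd_const _ c z) (fun f hf => wd_sum hf) (fun f g hf hg => wd_mul hf hg) m p
  have wdbarH : ∀ j0 m p : Fin n, wdbar j0 (fun w => hinv h w m p) z
      = - ∑ k, ∑ l, hinv h z k p * wdbar j0 (entry h k l) z * hinv h z m l := fun j0 m p =>
    deriv_hinv_general hU hz hsm hpd (fun f => wdbar j0 f z) (fun hfg => wdbar_congr hfg)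
      (fun c => wdbar_const _ c z) (fun f hf => wdbar_sum hf) (fun f g hf hg => wdbar_mul hf hg) m p
  -- commutation of mixed derivatives
  have comm : ∀ i0 j0 a b : Fin n,
      wdbar j0 (wd i0 (entry h a b)) z = wd i0 (wdbar j0 (entry h a b)) z :=
    fun i0 j0 a b => wd_wdbar_comm hU hz (hsm a b)
  -- conjugation
  have conjWd : ∀ j0 q m : Fin n,
      (starRingEnd ℂ) (wd j0 (entry h q m) z) = wdbar j0 (entry h m q) z := by
    intro j0 q m
    have hev : entry h m q =ᶠ[nhds z] fun w => (starRingEnd ℂ) (entry h q m w) := by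
      filter_upwards [hnz] with w hw
      exact entry_conj hpd hw m q
    calc (starRingEnd ℂ) (wd j0 (entry h q m) z)
        = wdbar j0 (fun w => (starRingEnd ℂ) (entry h q m w)) z := (wdbar_conj _ z).symm
      _ = wdbar j0 (entry h m q) z := (wdbar_congr hev).symm
  -- ====== expansion of Spc ======
  have hSpc : Spc h i j z =
      (∑ k, ∑ l, hinv h z k l * wd k (wdbar j (entry h i l)) z)
      + (∑ k, ∑ l, hinv h z k l * wd i (wdbar l (entry h k j)) z)
      - (∑ k, ∑ l, hinv h z k l * wd i (wdbar j (entry h k l)) z)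
      - (∑ k, ∑ l, hinv h z k l * wd k (wdbar l (entry h i j)) z) := by
    simp only [Spc, mul_add, mul_sub, Finset.sum_add_distrib, Finset.sum_sub_distrib]
  -- ====== expansion of Ric1 ======
  have hRic1 : Ric1 h i j z =
      -(∑ k, ∑ l, hinv h z k l * wd i (wdbar j (entry h k l)) z)
      + (∑ p, ∑ q, ∑ m, ∑ m', hinv h z p q * hinv h z m' m *
          (wd i (entry h p m) z * wdbar j (entry h m' q) z)) := by
    have e1 : Ric1 h i j z =
        (∑ k, ∑ l, -(hinv h z k l * wd i (wdbar j (entry h k l)) z))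
        + ∑ k, ∑ l, ∑ p, ∑ q,
            hinv h z k l * (hinv h z p q * wdbar j (entry h p l) z * wd i (entry h k q) z) := by
      simp only [Ric1, ChernCurv, mul_add, mul_neg, Finset.mul_sum, Finset.sum_add_distrib]
    rw [e1]
    congr 1
    · simp only [Finset.sum_neg_distrib]
    · exact sum4_perm_eq _ _ eA (by intro a b c d; simp only [eA, Equiv.coe_fn_mk]; try ring)
  -- ====== expansion of Ric2 ======
  have hRic2 : Ric2 h i j z =
      -(∑ k, ∑ l, hinv h z k l * wd k (wdbar l (entry h i j)) z)
      + (∑ p, ∑ q, ∑ m, ∑ m', hinv h z p q * hinv h z m' m *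
          (wd p (entry h i m) z * wdbar q (entry h m' j) z)) := by
    have e1 : Ric2 h i j z =
        (∑ k, ∑ l, -(hinv h z k l * wd k (wdbar l (entry h i j)) z))
        + ∑ k, ∑ l, ∑ p, ∑ q,
            hinv h z k l * (hinv h z p q * wdbar l (entry h p j) z * wd k (entry h i q) z) := by
      simp only [Ric2, ChernCurv, mul_add, mul_neg, Finset.mul_sum, Finset.sum_add_distrib]
    rw [e1]
    congr 1
    · simp only [Finset.sum_neg_distrib]
    · exact sum4_perm_eq _ _ eA (by intro a b c d; simp only [eA, Equiv.coe_fn_mk]; try ring)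
  -- ====== star of torsion ======
  have starT : ∀ q l : Fin n, star (Tors h j q l z)
      = ∑ m', hinv h z m' l * (wdbar j (entry h m' q) z - wdbar q (entry h m' j) z) := by
    intro q l
    rw [show Tors h j q l z
        = ∑ m, hinv h z l m * (wd j (entry h q m) z - wd q (entry h j m) z) from rfl]
    rw [star_sum]
    refine Finset.sum_congr rfl fun m _ => ?_
    rw [star_mul', star_sub]
    simp only [← starRingEnd_apply]
    rw [← hinv_conj hpd hz m l, conjWd j q m, conjWd q j m]
  -- ====== expansion of Qtor ======
  have hQ : Qtor h i j z =
      ((∑ p, ∑ q, ∑ m, ∑ m', hinv h z p q * hinv h z m' m *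
          (wd i (entry h p m) z * wdbar j (entry h m' q) z))
        - (∑ p, ∑ q, ∑ m, ∑ m', hinv h z p q * hinv h z m' m *
          (wd i (entry h p m) z * wdbar q (entry h m' j) z)))
      - ((∑ p, ∑ q, ∑ m, ∑ m', hinv h z p q * hinv h z m' m *
          (wd p (entry h i m) z * wdbar j (entry h m' q) z))
        - (∑ p, ∑ q, ∑ m, ∑ m', hinv h z p q * hinv h z m' m *
          (wd p (entry h i m) z * wdbar q (entry h m' j) z))) := by
    have e1 : Qtor h i j z = ∑ p, ∑ q, ∑ m, ∑ m',
        hinv h z p q * hinv h z m' m *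
          ((wd i (entry h p m) z - wd p (entry h i m) z) *
           (wdbar j (entry h m' q) z - wdbar q (entry h m' j) z)) := by
      rw [Qtor]
      refine Finset.sum_congr rfl fun p _ => Finset.sum_congr rfl fun q _ => ?_
      calc ∑ k, ∑ l, hinv h z p q * h z k l * Tors h i p k z * star (Tors h j q l z)
          = ∑ l, ∑ k, hinv h z p q * h z k l * Tors h i p k z * star (Tors h j q l z) :=
            Finset.sum_comm
        _ = ∑ l, (hinv h z p q * star (Tors h j q l z)) *
              (∑ k, entry h k l z * Tors h i p k z) := by
            refine Finset.sum_congr rfl fun l _ => ?_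
            rw [Finset.mul_sum]
            refine Finset.sum_congr rfl fun k _ => ?_
            show hinv h z p q * entry h k l z * Tors h i p k z * star (Tors h j q l z) = _
            ring
        _ = ∑ l, (hinv h z p q * star (Tors h j q l z)) *
              (wd i (entry h p l) z - wd p (entry h i l) z) := by
            refine Finset.sum_congr rfl fun l _ => ?_
            congr 1
            exact collapse_k hpd hz
              (fun m => wd i (entry h p m) z - wd p (entry h i m) z) l
        _ = ∑ m, ∑ m', hinv h z p q * hinv h z m' m *
              ((wd i (entry h p m) z - wd p (entry h i m) z) *
               (wdbar j (entry h m' q) z - wdbar q (entry h m' j) z)) := by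
            simp only [starT]
            refine Finset.sum_congr rfl fun l _ => ?_
            rw [Finset.mul_sum, Finset.sum_mul]
            refine Finset.sum_congr rfl fun m' _ => ?_
            ring
    rw [e1]
    calc ∑ p, ∑ q, ∑ m, ∑ m', hinv h z p q * hinv h z m' m *
          ((wd i (entry h p m) z - wd p (entry h i m) z) *
           (wdbar j (entry h m' q) z - wdbar q (entry h m' j) z))
        = ∑ p, ∑ q, ∑ m, ∑ m',
          ((hinv h z p q * hinv h z m' m * (wd i (entry h p m) z * wdbar j (entry h m' q) z)
            - hinv h z p q * hinv h z m' m * (wd i (entry h p m) z * wdbar q (entry h m' j) z))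
          - (hinv h z p q * hinv h z m' m * (wd p (entry h i m) z * wdbar j (entry h m' q) z)
            - hinv h z p q * hinv h z m' m * (wd p (entry h i m) z * wdbar q (entry h m' j) z))) := by
          refine Finset.sum_congr rfl fun p _ => Finset.sum_congr rfl fun q _ =>
            Finset.sum_congr rfl fun m _ => Finset.sum_congr rfl fun m' _ => ?_
          ring
      _ = _ := by
          simp only [Finset.sum_sub_distrib]
  -- ====== expansion of the Gam sum ======
  have hGamDiff : ∀ k : Fin n, DifferentiableAt ℝ (Gam h i k k) z := by
    intro k
    have e0 : Gam h i k k = fun w => (1 / 2 : ℂ) *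
        ∑ l, hinv h w k l * (wd i (entry h k l) w + wd k (entry h i l) w) := rfl
    rw [e0]
    exact (differentiableAt_const _).mul
      (DifferentiableAt.fun_sum fun l _ => (dB k l).fun_mul ((dwd i k l).fun_add (dwd k i l)))
  have hGamExp : ∀ k : Fin n, wdbar j (Gam h i k k) z = (1 / 2 : ℂ) * ∑ l,
      (wdbar j (fun w => hinv h w k l) z * (wd i (entry h k l) z + wd k (entry h i l) z)
        + hinv h z k l * (wd i (wdbar j (entry h k l)) z + wd k (wdbar j (entry h i l)) z)) := by
    intro k
    have e0 : Gam h i k k = fun w => (1 / 2 : ℂ) *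
        ∑ l, hinv h w k l * (wd i (entry h k l) w + wd k (entry h i l) w) := rfl
    rw [e0, wdbar_const_mul _
      (DifferentiableAt.fun_sum fun l _ => (dB k l).fun_mul ((dwd i k l).fun_add (dwd k i l)))]
    congr 1
    rw [wdbar_sum (fun l _ => (dB k l).fun_mul ((dwd i k l).fun_add (dwd k i l)))]
    refine Finset.sum_congr rfl fun l _ => ?_
    rw [wdbar_mul (dB k l) ((dwd i k l).fun_add (dwd k i l)),
      wdbar_add (dwd i k l) (dwd k i l), comm i j k l, comm k j i l]
  have stepG : ∀ k l : Fin n,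
      (-(∑ a, ∑ b, hinv h z a l * wdbar j (entry h a b) z * hinv h z k b)
          * (wd i (entry h k l) z + wd k (entry h i l) z)
        + hinv h z k l * (wd i (wdbar j (entry h k l)) z + wd k (wdbar j (entry h i l)) z))
      = (hinv h z k l * wd i (wdbar j (entry h k l)) z
          + hinv h z k l * wd k (wdbar j (entry h i l)) z)
        - ((∑ a, ∑ b, hinv h z a l * hinv h z k b *
              (wd i (entry h k l) z * wdbar j (entry h a b) z))
          + (∑ a, ∑ b, hinv h z a l * hinv h z k b *
              (wd k (entry h i l) z * wdbar j (entry h a b) z))) := by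
    intro k l
    have e2 : (∑ a, ∑ b, hinv h z a l * wdbar j (entry h a b) z * hinv h z k b)
        * (wd i (entry h k l) z + wd k (entry h i l) z)
        = (∑ a, ∑ b, hinv h z a l * hinv h z k b *
            (wd i (entry h k l) z * wdbar j (entry h a b) z))
        + (∑ a, ∑ b, hinv h z a l * hinv h z k b *
            (wd k (entry h i l) z * wdbar j (entry h a b) z)) := by
      rw [Finset.sum_mul, ← Finset.sum_add_distrib]
      refine Finset.sum_congr rfl fun a _ => ?_
      rw [Finset.sum_mul, ← Finset.sum_add_distrib]
      refine Finset.sum_congr rfl fun b _ => ?_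
      ring
    linear_combination -e2
  have hG : wdbar j (fun w => ∑ k, Gam h i k k w) z
      = (1 / 2 : ℂ) * ((∑ k, ∑ l, hinv h z k l * wd i (wdbar j (entry h k l)) z)
          + (∑ k, ∑ l, hinv h z k l * wd k (wdbar j (entry h i l)) z))
        - (1 / 2 : ℂ) * ((∑ k, ∑ l, ∑ a, ∑ b, hinv h z a l * hinv h z k b *
              (wd i (entry h k l) z * wdbar j (entry h a b) z))
          + (∑ k, ∑ l, ∑ a, ∑ b, hinv h z a l * hinv h z k b *
              (wd k (entry h i l) z * wdbar j (entry h a b) z))) := by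
    rw [wdbar_sum (fun k _ => hGamDiff k)]
    simp only [hGamExp, wdbarH]
    simp only [stepG]
    simp only [Finset.sum_sub_distrib, Finset.sum_add_distrib, mul_add, mul_sub,
      ← Finset.mul_sum]
    try ring
  -- ====== expansion of the GamBar sum ======
  have hGamBarDiff : ∀ k : Fin n, DifferentiableAt ℝ (GamBar h j k k) z := by
    intro k
    have e0 : GamBar h j k k = fun w => (1 / 2 : ℂ) *
        ∑ l, hinv h w k l * (wdbar j (entry h k l) w - wdbar l (entry h k j) w) := rfl
    rw [e0]
    exact (differentiableAt_const _).mul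
      (DifferentiableAt.fun_sum fun l _ => (dB k l).fun_mul ((dwdbar j k l).fun_sub (dwdbar l k j)))
  have hGamBarExp : ∀ k : Fin n, wd i (GamBar h j k k) z = (1 / 2 : ℂ) * ∑ l,
      (wd i (fun w => hinv h w k l) z * (wdbar j (entry h k l) z - wdbar l (entry h k j) z)
        + hinv h z k l * (wd i (wdbar j (entry h k l)) z - wd i (wdbar l (entry h k j)) z)) := by
    intro k
    have e0 : GamBar h j k k = fun w => (1 / 2 : ℂ) *
        ∑ l, hinv h w k l * (wdbar j (entry h k l) w - wdbar l (entry h k j) w) := rfl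
    rw [e0, wd_const_mul _
      (DifferentiableAt.fun_sum fun l _ => (dB k l).fun_mul ((dwdbar j k l).fun_sub (dwdbar l k j)))]
    congr 1
    rw [wd_sum (fun l _ => (dB k l).fun_mul ((dwdbar j k l).fun_sub (dwdbar l k j)))]
    refine Finset.sum_congr rfl fun l _ => ?_
    rw [wd_mul (dB k l) ((dwdbar j k l).fun_sub (dwdbar l k j)),
      wd_sub (dwdbar j k l) (dwdbar l k j)]
  have stepGbar : ∀ k l : Fin n,
      (-(∑ a, ∑ b, hinv h z a l * wd i (entry h a b) z * hinv h z k b)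
          * (wdbar j (entry h k l) z - wdbar l (entry h k j) z)
        + hinv h z k l * (wd i (wdbar j (entry h k l)) z - wd i (wdbar l (entry h k j)) z))
      = (hinv h z k l * wd i (wdbar j (entry h k l)) z
          - hinv h z k l * wd i (wdbar l (entry h k j)) z)
        - ((∑ a, ∑ b, hinv h z a l * hinv h z k b *
              (wd i (entry h a b) z * wdbar j (entry h k l) z))
          - (∑ a, ∑ b, hinv h z a l * hinv h z k b *
              (wd i (entry h a b) z * wdbar l (entry h k j) z))) := by
    intro k l
    have e2 : (∑ a, ∑ b, hinv h z a l * wd i (entry h a b) z * hinv h z k b)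
        * (wdbar j (entry h k l) z - wdbar l (entry h k j) z)
        = (∑ a, ∑ b, hinv h z a l * hinv h z k b *
            (wd i (entry h a b) z * wdbar j (entry h k l) z))
        - (∑ a, ∑ b, hinv h z a l * hinv h z k b *
            (wd i (entry h a b) z * wdbar l (entry h k j) z)) := by
      rw [Finset.sum_mul, ← Finset.sum_sub_distrib]
      refine Finset.sum_congr rfl fun a _ => ?_
      rw [Finset.sum_mul, ← Finset.sum_sub_distrib]
      refine Finset.sum_congr rfl fun b _ => ?_
      ring
    linear_combination -e2
  have hGbar : wd i (fun w => ∑ k, GamBar h j k k w) z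
      = (1 / 2 : ℂ) * ((∑ k, ∑ l, hinv h z k l * wd i (wdbar j (entry h k l)) z)
          - (∑ k, ∑ l, hinv h z k l * wd i (wdbar l (entry h k j)) z))
        - (1 / 2 : ℂ) * ((∑ k, ∑ l, ∑ a, ∑ b, hinv h z a l * hinv h z k b *
              (wd i (entry h a b) z * wdbar j (entry h k l) z))
          - (∑ k, ∑ l, ∑ a, ∑ b, hinv h z a l * hinv h z k b *
              (wd i (entry h a b) z * wdbar l (entry h k j) z))) := by
    rw [wd_sum (fun k _ => hGamBarDiff k)]
    simp only [hGamBarExp, wdH]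
    simp only [stepGbar]
    simp only [Finset.sum_sub_distrib, Finset.sum_add_distrib, mul_add, mul_sub,
      ← Finset.mul_sum]
    try ring
  -- ====== reindexing the quartic sums ======
  have eSa : (∑ k, ∑ l, ∑ a, ∑ b, hinv h z a l * hinv h z k b *
        (wd i (entry h k l) z * wdbar j (entry h a b) z))
      = ∑ p, ∑ q, ∑ m, ∑ m', hinv h z p q * hinv h z m' m *
        (wd i (entry h p m) z * wdbar j (entry h m' q) z) :=
    sum4_perm_eq _ _ eB (by intro a b c d; simp only [eB, Equiv.coe_fn_mk]; try ring)
  have eSb : (∑ k, ∑ l, ∑ a, ∑ b, hinv h z a l * hinv h z k b *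
        (wd k (entry h i l) z * wdbar j (entry h a b) z))
      = ∑ p, ∑ q, ∑ m, ∑ m', hinv h z p q * hinv h z m' m *
        (wd p (entry h i m) z * wdbar j (entry h m' q) z) :=
    sum4_perm_eq _ _ eB (by intro a b c d; simp only [eB, Equiv.coe_fn_mk]; try ring)
  have eRa : (∑ k, ∑ l, ∑ a, ∑ b, hinv h z a l * hinv h z k b *
        (wd i (entry h a b) z * wdbar j (entry h k l) z))
      = ∑ p, ∑ q, ∑ m, ∑ m', hinv h z p q * hinv h z m' m *
        (wd i (entry h p m) z * wdbar j (entry h m' q) z) :=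
    sum4_perm_eq _ _ eC (by intro a b c d; simp only [eC, Equiv.coe_fn_mk]; try ring)
  have eRb : (∑ k, ∑ l, ∑ a, ∑ b, hinv h z a l * hinv h z k b *
        (wd i (entry h a b) z * wdbar l (entry h k j) z))
      = ∑ p, ∑ q, ∑ m, ∑ m', hinv h z p q * hinv h z m' m *
        (wd i (entry h p m) z * wdbar q (entry h m' j) z) :=
    sum4_perm_eq _ _ eC (by intro a b c d; simp only [eC, Equiv.coe_fn_mk]; try ring)
  -- ====== final assembly ======
  rw [hRic1, hRic2, hSpc, hQ, LCRic1, hG, hGbar, eSa, eSb, eRa, eRb]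
  ring
end

section
/- Let U ⊆ ℂ^n be open, let h = (h_{kℓ̄}) : U → Matrix(n,n,ℂ) be a Hermitian metric on U (smooth, pointwise Hermitian positive definite) with inverse entries h^{kℓ̄} := (h(z)⁻¹)_{ℓk}, and let f : U → ℝ be smooth. For a Hermitian metric g on U define its Chern curvature Θ(g)_{ij̄kℓ̄} = −∂_i∂̄_j g_{kℓ̄} + Σ_{p,q} g^{pq̄} (∂̄_j g_{pℓ̄})(∂_i g_{kq̄}) and its second Chern-Ricci curvature Θ^{(2)}(g)_{ij̄} = Σ_{k,ℓ} g^{kℓ̄} Θ(g)_{kℓ̄ij̄}. Then at every point of U and for all i,j: Θ^{(2)}(e^f h)_{ij̄} = Θ^{(2)}(h)_{ij̄} − ( Σ_{k,ℓ} h^{kℓ̄} ∂_k∂̄_ℓ f ) · h_{ij̄}. -/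
open BigOperators
open scoped ComplexOrder

noncomputable section
namespace CAux
variable {n : ℕ}

lemma wd_congr {φ ψ : (Fin n → ℂ) → ℂ} {z : Fin n → ℂ} (hev : φ =ᶠ[nhds z] ψ) (i : Fin n) :
    wd i φ z = wd i ψ z := by unfold wd; rw [hev.fderiv_eq]

lemma wd_add {φ ψ : (Fin n → ℂ) → ℂ} {z : Fin n → ℂ} (hφ : DifferentiableAt ℝ φ z)
    (hψ : DifferentiableAt ℝ ψ z) (i : Fin n) :
    wd i (fun w => φ w + ψ w) z = wd i φ z + wd i ψ z := by
  unfold wd; rw [fderiv_fun_add hφ hψ]; simp; ring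

lemma wdbar_add {φ ψ : (Fin n → ℂ) → ℂ} {z : Fin n → ℂ} (hφ : DifferentiableAt ℝ φ z)
    (hψ : DifferentiableAt ℝ ψ z) (j : Fin n) :
    wdbar j (fun w => φ w + ψ w) z = wdbar j φ z + wdbar j ψ z := by
  unfold wdbar; rw [fderiv_fun_add hφ hψ]; simp; ring

lemma wd_mul {φ ψ : (Fin n → ℂ) → ℂ} {z : Fin n → ℂ} (hφ : DifferentiableAt ℝ φ z)
    (hψ : DifferentiableAt ℝ ψ z) (i : Fin n) :
    wd i (fun w => φ w * ψ w) z = φ z * wd i ψ z + ψ z * wd i φ z := by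
  unfold wd; rw [fderiv_fun_mul hφ hψ]; simp [smul_eq_mul]; ring

lemma wdbar_mul {φ ψ : (Fin n → ℂ) → ℂ} {z : Fin n → ℂ} (hφ : DifferentiableAt ℝ φ z)
    (hψ : DifferentiableAt ℝ ψ z) (j : Fin n) :
    wdbar j (fun w => φ w * ψ w) z = φ z * wdbar j ψ z + ψ z * wdbar j φ z := by
  unfold wdbar; rw [fderiv_fun_mul hφ hψ]; simp [smul_eq_mul]; ring

lemma fderiv_ofReal_comp {g : (Fin n → ℂ) → ℝ} {z : Fin n → ℂ} (hg : DifferentiableAt ℝ g z)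
    (v : Fin n → ℂ) :
    fderiv ℝ (fun w => ((g w : ℝ) : ℂ)) z v = ((fderiv ℝ g z v : ℝ) : ℂ) := by
  have h1 : fderiv ℝ (⇑Complex.ofRealCLM ∘ g) z = Complex.ofRealCLM.comp (fderiv ℝ g z) :=
    (Complex.ofRealCLM.hasFDerivAt.comp z hg.hasFDerivAt).fderiv
  rw [show (fun w => ((g w : ℝ):ℂ)) = ⇑Complex.ofRealCLM ∘ g from rfl, h1]; rfl

lemma wd_exp {f : (Fin n → ℂ) → ℝ} {z : Fin n → ℂ} (hf : DifferentiableAt ℝ f z) (i : Fin n) :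
    wd i (fun w => ((Real.exp (f w) : ℝ) : ℂ)) z
      = (Real.exp (f z) : ℂ) * wd i (fun w => ((f w : ℝ) : ℂ)) z := by
  unfold wd
  rw [fderiv_ofReal_comp hf.exp, fderiv_ofReal_comp hf.exp, fderiv_ofReal_comp hf,
    fderiv_ofReal_comp hf, fderiv_exp hf]
  simp [smul_eq_mul]
  ring

lemma wdbar_exp {f : (Fin n → ℂ) → ℝ} {z : Fin n → ℂ} (hf : DifferentiableAt ℝ f z) (j : Fin n) :
    wdbar j (fun w => ((Real.exp (f w) : ℝ) : ℂ)) z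
      = (Real.exp (f z) : ℂ) * wdbar j (fun w => ((f w : ℝ) : ℂ)) z := by
  unfold wdbar
  rw [fderiv_ofReal_comp hf.exp, fderiv_ofReal_comp hf.exp, fderiv_ofReal_comp hf,
    fderiv_ofReal_comp hf, fderiv_exp hf]
  simp [smul_eq_mul]
  ring

lemma contDiffOn_wd {U : Set (Fin n → ℂ)} (hU : IsOpen U) {φ : (Fin n → ℂ) → ℂ}
    (hφ : ContDiffOn ℝ ((⊤ : ℕ∞) : WithTop ℕ∞) φ U) (i : Fin n) :
    ContDiffOn ℝ ((⊤ : ℕ∞) : WithTop ℕ∞) (wd i φ) U := by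
  have hD : ContDiffOn ℝ ((⊤ : ℕ∞) : WithTop ℕ∞) (fderiv ℝ φ) U :=
    hφ.fderiv_of_isOpen hU (le_of_eq rfl)
  have h1 := hD.clm_apply (contDiffOn_const (c := (Pi.single i 1 : Fin n → ℂ)))
  have h2 := hD.clm_apply (contDiffOn_const (c := (Pi.single i Complex.I : Fin n → ℂ)))
  exact contDiffOn_const.mul (h1.sub (contDiffOn_const.mul h2))

lemma contDiffOn_wdbar {U : Set (Fin n → ℂ)} (hU : IsOpen U) {φ : (Fin n → ℂ) → ℂ}
    (hφ : ContDiffOn ℝ ((⊤ : ℕ∞) : WithTop ℕ∞) φ U) (j : Fin n) :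
    ContDiffOn ℝ ((⊤ : ℕ∞) : WithTop ℕ∞) (wdbar j φ) U := by
  have hD : ContDiffOn ℝ ((⊤ : ℕ∞) : WithTop ℕ∞) (fderiv ℝ φ) U :=
    hφ.fderiv_of_isOpen hU (le_of_eq rfl)
  have h1 := hD.clm_apply (contDiffOn_const (c := (Pi.single j 1 : Fin n → ℂ)))
  have h2 := hD.clm_apply (contDiffOn_const (c := (Pi.single j Complex.I : Fin n → ℂ)))
  exact contDiffOn_const.mul (h1.add (contDiffOn_const.mul h2))

lemma diffAt {U : Set (Fin n → ℂ)} (hU : IsOpen U) {E : Type*} [NormedAddCommGroup E]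
    [NormedSpace ℝ E] {φ : (Fin n → ℂ) → E}
    (hφ : ContDiffOn ℝ ((⊤ : ℕ∞) : WithTop ℕ∞) φ U) {z : Fin n → ℂ} (hz : z ∈ U) :
    DifferentiableAt ℝ φ z :=
  (hφ.differentiableOn (by simp)).differentiableAt (hU.mem_nhds hz)

end CAux
end


open CAux

/-- Conformal transformation formula for the second Chern-Ricci curvature:
`Θ^{(2)}(e^f h)_{ij̄} = Θ^{(2)}(h)_{ij̄} − (Σ_{k,ℓ} h^{kℓ̄} ∂_k∂̄_ℓ f) h_{ij̄}` on `U`. -/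
theorem secondChernRicci_conformal_change {n : ℕ}
    (U : Set (Fin n → ℂ)) (hU : IsOpen U)
    (h : (Fin n → ℂ) → Matrix (Fin n) (Fin n) ℂ)
    (hsmooth : ∀ k l : Fin n, ContDiffOn ℝ (⊤ : ℕ∞) (entry h k l) U)
    (hpd : ∀ z ∈ U, (h z).PosDef)
    (f : (Fin n → ℂ) → ℝ) (hf : ContDiffOn ℝ (⊤ : ℕ∞) f U)
    (hf' : (Fin n → ℂ) → Matrix (Fin n) (Fin n) ℂ)
    (hhf' : ∀ z, hf' z = (Real.exp (f z) : ℂ) • h z) :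
    ∀ z ∈ U, ∀ i j : Fin n,
      Ric2 hf' i j z =
        Ric2 h i j z -
          (∑ k, ∑ l, hinv h z k l * wd k (wdbar l (fun w => ((f w : ℂ)))) z) * h z i j := by
  -- smoothness, at level ∞
  have cH : ∀ a b : Fin n, ContDiffOn ℝ ((⊤ : ℕ∞) : WithTop ℕ∞) (entry h a b) U :=
    fun a b => (hsmooth a b).of_le (by simp)
  have cfR : ContDiffOn ℝ ((⊤ : ℕ∞) : WithTop ℕ∞) f U := hf.of_le (by simp)
  have cF : ContDiffOn ℝ ((⊤ : ℕ∞) : WithTop ℕ∞) (fun w => ((f w : ℝ) : ℂ)) U :=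
    Complex.ofRealCLM.contDiff.comp_contDiffOn cfR
  have cE : ContDiffOn ℝ ((⊤ : ℕ∞) : WithTop ℕ∞) (fun w => ((Real.exp (f w) : ℝ) : ℂ)) U :=
    Complex.ofRealCLM.contDiff.comp_contDiffOn (Real.contDiff_exp.comp_contDiffOn cfR)
  -- pointwise differentiability
  have dH : ∀ w ∈ U, ∀ a b : Fin n, DifferentiableAt ℝ (entry h a b) w :=
    fun w hw a b => diffAt hU (cH a b) hw
  have dfR : ∀ w ∈ U, DifferentiableAt ℝ f w := fun w hw => diffAt hU cfR hw
  have dF : ∀ w ∈ U, DifferentiableAt ℝ (fun w => ((f w : ℝ) : ℂ)) w :=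
    fun w hw => diffAt hU cF hw
  have dE : ∀ w ∈ U, DifferentiableAt ℝ (fun w => ((Real.exp (f w) : ℝ) : ℂ)) w :=
    fun w hw => diffAt hU cE hw
  have dbH : ∀ w ∈ U, ∀ (l a b : Fin n), DifferentiableAt ℝ (wdbar l (entry h a b)) w :=
    fun w hw l a b => diffAt hU (contDiffOn_wdbar hU (cH a b) l) hw
  have dbF : ∀ w ∈ U, ∀ l : Fin n,
      DifferentiableAt ℝ (wdbar l (fun w => ((f w : ℝ) : ℂ))) w :=
    fun w hw l => diffAt hU (contDiffOn_wdbar hU cF l) hw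
  -- conformal factor rewriting
  have hf'eq : ∀ a b : Fin n,
      entry hf' a b = fun w => ((Real.exp (f w) : ℝ) : ℂ) * entry h a b w := by
    intro a b; funext w; simp [entry, hhf', Matrix.smul_apply, smul_eq_mul]
  -- first derivatives of the conformal metric
  have key1 : ∀ w ∈ U, ∀ (d a b : Fin n),
      wd d (entry hf' a b) w
        = (Real.exp (f w) : ℂ) * (wd d (entry h a b) w
            + entry h a b w * wd d (fun w => ((f w : ℝ) : ℂ)) w) := by
    intro w hw d a b
    rw [hf'eq a b, wd_mul (dE w hw) (dH w hw a b) d, wd_exp (dfR w hw) d]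
    ring
  have key1bar : ∀ w ∈ U, ∀ (d a b : Fin n),
      wdbar d (entry hf' a b) w
        = (Real.exp (f w) : ℂ) * (wdbar d (entry h a b) w
            + entry h a b w * wdbar d (fun w => ((f w : ℝ) : ℂ)) w) := by
    intro w hw d a b
    rw [hf'eq a b, wdbar_mul (dE w hw) (dH w hw a b) d, wdbar_exp (dfR w hw) d]
    ring
  intro z hz i j
  -- second derivatives
  have key2 : ∀ k l a b : Fin n,
      wd k (wdbar l (entry hf' a b)) z
        = (Real.exp (f z) : ℂ) * (wd k (wdbar l (entry h a b)) z
            + wd k (wdbar l (fun w => ((f w : ℝ) : ℂ))) z * entry h a b z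
            + wd k (fun w => ((f w : ℝ) : ℂ)) z
                * wdbar l (fun w => ((f w : ℝ) : ℂ)) z * entry h a b z
            + wd k (fun w => ((f w : ℝ) : ℂ)) z * wdbar l (entry h a b) z
            + wdbar l (fun w => ((f w : ℝ) : ℂ)) z * wd k (entry h a b) z) := by
    intro k l a b
    have hev : wdbar l (entry hf' a b) =ᶠ[nhds z]
        (fun w => ((Real.exp (f w) : ℝ) : ℂ) * (wdbar l (entry h a b) w
          + entry h a b w * wdbar l (fun w => ((f w : ℝ) : ℂ)) w)) := by
      filter_upwards [hU.mem_nhds hz] with w hw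
      exact key1bar w hw l a b
    rw [wd_congr hev k]
    rw [wd_mul (dE z hz)
      ((dbH z hz l a b).fun_add ((dH z hz a b).fun_mul (dbF z hz l))) k]
    rw [wd_add (dbH z hz l a b) ((dH z hz a b).fun_mul (dbF z hz l)) k]
    rw [wd_mul (dH z hz a b) (dbF z hz l) k]
    rw [wd_exp (dfR z hz) k]
    ring
  -- matrix inverse facts
  have hud : IsUnit (h z).det := ((Matrix.isUnit_iff_isUnit_det (h z)).1 (hpd z hz).isUnit)
  have hAB : h z * (h z)⁻¹ = 1 := Matrix.mul_nonsing_inv _ hud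
  have hBA : (h z)⁻¹ * h z = 1 := Matrix.nonsing_inv_mul _ hud
  have hEne : ((Real.exp (f z) : ℝ) : ℂ) ≠ 0 := by
    exact_mod_cast Real.exp_ne_zero (f z)
  have hinv' : (hf' z)⁻¹ = ((Real.exp (f z) : ℝ) : ℂ)⁻¹ • (h z)⁻¹ := by
    apply Matrix.inv_eq_right_inv
    rw [hhf', Matrix.smul_mul, Matrix.mul_smul, hAB, smul_smul, mul_inv_cancel₀ hEne, one_smul]
  have hinvf : ∀ p q : Fin n, hinv hf' z p q = ((Real.exp (f z) : ℝ) : ℂ)⁻¹ * hinv h z p q := by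
    intro p q; simp [hinv, hinv', Matrix.smul_apply, smul_eq_mul]
  -- contraction lemmas
  have c1 : ∀ Y : Fin n → ℂ, (∑ p, ∑ q, hinv h z p q * Y p * h z i q) = Y i := by
    intro Y
    have e1 : ∀ p, (∑ q, hinv h z p q * Y p * h z i q) = (h z * (h z)⁻¹) i p * Y p := by
      intro p
      rw [Matrix.mul_apply, Finset.sum_mul]
      refine Finset.sum_congr rfl fun q _ => ?_
      simp [hinv]; ring
    rw [Finset.sum_congr rfl fun p _ => e1 p, hAB]
    simp [Matrix.one_apply]
  have c2 : ∀ X : Fin n → ℂ, (∑ p, ∑ q, hinv h z p q * h z p j * X q) = X j := by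
    intro X
    rw [Finset.sum_comm]
    have e1 : ∀ q, (∑ p, hinv h z p q * h z p j * X q) = ((h z)⁻¹ * h z) q j * X q := by
      intro q
      rw [Matrix.mul_apply, Finset.sum_mul]
      refine Finset.sum_congr rfl fun p _ => ?_
      simp [hinv]
    rw [Finset.sum_congr rfl fun q _ => e1 q, hBA]
    simp [Matrix.one_apply]
  -- specialized contractions
  have C1 : ∀ l : Fin n, (∑ p, ∑ q, hinv h z p q * wdbar l (entry h p j) z * h z i q)
      = wdbar l (entry h i j) z := fun l => c1 (fun p => wdbar l (entry h p j) z)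
  have C2 : ∀ k : Fin n, (∑ p, ∑ q, hinv h z p q * h z p j * wd k (entry h i q) z)
      = wd k (entry h i j) z := fun k => c2 (fun q => wd k (entry h i q) z)
  have C3 : (∑ p, ∑ q, hinv h z p q * h z p j * h z i q) = h z i j :=
    c2 (fun q => h z i q)
  -- conformal change of the Chern curvature
  have chern_conf : ∀ k l : Fin n,
      ChernCurv hf' k l i j z
        = ((Real.exp (f z) : ℝ) : ℂ) * (ChernCurv h k l i j z
            - wd k (wdbar l (fun w => ((f w : ℝ) : ℂ))) z * h z i j) := by
    intro k l
    unfold ChernCurv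
    rw [key2 k l i j]
    have hterm : ∀ p q : Fin n,
        hinv hf' z p q * wdbar l (entry hf' p j) z * wd k (entry hf' i q) z
          = ((Real.exp (f z) : ℝ) : ℂ)
                * (hinv h z p q * wdbar l (entry h p j) z * wd k (entry h i q) z)
            + (((Real.exp (f z) : ℝ) : ℂ) * wd k (fun w => ((f w : ℝ) : ℂ)) z)
                * (hinv h z p q * wdbar l (entry h p j) z * h z i q)
            + (((Real.exp (f z) : ℝ) : ℂ) * wdbar l (fun w => ((f w : ℝ) : ℂ)) z)
                * (hinv h z p q * h z p j * wd k (entry h i q) z)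
            + (((Real.exp (f z) : ℝ) : ℂ) * wd k (fun w => ((f w : ℝ) : ℂ)) z
                  * wdbar l (fun w => ((f w : ℝ) : ℂ)) z)
                * (hinv h z p q * h z p j * h z i q) := by
      intro p q
      rw [hinvf p q, key1bar z hz l p j, key1 z hz k i q]
      have hent1 : entry h p j z = h z p j := rfl
      have hent2 : entry h i q z = h z i q := rfl
      rw [hent1, hent2]
      field_simp
      ring
    rw [Finset.sum_congr rfl fun p _ => Finset.sum_congr rfl fun q _ => hterm p q]
    simp_rw [Finset.sum_add_distrib, ← Finset.mul_sum]
    rw [C1 l, C2 k, C3]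
    have hent3 : entry h i j z = h z i j := rfl
    rw [hent3]
    ring
  -- assemble
  unfold Ric2
  have hterm2 : ∀ k l : Fin n,
      hinv hf' z k l * ChernCurv hf' k l i j z
        = hinv h z k l * ChernCurv h k l i j z
          - hinv h z k l * wd k (wdbar l (fun w => ((f w : ℝ) : ℂ))) z * h z i j := by
    intro k l
    rw [hinvf k l, chern_conf k l]
    field_simp
  rw [Finset.sum_congr rfl fun k _ => Finset.sum_congr rfl fun l _ => hterm2 k l]
  simp_rw [Finset.sum_sub_distrib, Finset.sum_mul]
end

section
/- Let h be a 2×2 Hermitian positive definite complex matrix with entries h_{kℓ̄} and inverse entries h^{pq̄} := (h⁻¹)_{qp}, and let T = (T_{ij}^k), i,j,k ∈ {1,2}, be complex numbers satisfying the antisymmetry T_{ij}^k = −T_{ji}^k for all i,j,k. Set τ_p := Σ_k T_{pk}^k and Q_{ij̄} := Σ_{p,q,k,ℓ} h^{pq̄} h_{kℓ̄} T_{ip}^k · conj(T_{jq}^ℓ). Then for all i,j ∈ {1,2}: Q_{ij̄} = ( Σ_{p,q} h^{pq̄} τ_p · conj(τ_q) ) · h_{ij̄}. -/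
open BigOperators
open scoped ComplexOrder

set_option maxHeartbeats 1000000

/-- On a complex surface, for a `2 × 2` Hermitian positive definite matrix `h`
(with inverse entries `h^{pq̄} = (h⁻¹) q p`) and an antisymmetric torsion array `T`,
the quadratic form `Q_{ij̄} = Σ_{p,q,k,ℓ} h^{pq̄} h_{kℓ̄} T_{ip}^k conj(T_{jq}^ℓ)` equals
`(Σ_{p,q} h^{pq̄} τ_p conj(τ_q)) h_{ij̄}` where `τ_p = Σ_k T_{pk}^k`. -/
theorem surface_Q_eq_trace_times_metric
    (h : Matrix (Fin 2) (Fin 2) ℂ) (hpd : h.PosDef)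
    (T : Fin 2 → Fin 2 → Fin 2 → ℂ)
    (hT : ∀ i j k, T i j k = - T j i k)
    (τ : Fin 2 → ℂ) (hτ : ∀ p, τ p = ∑ k, T p k k) :
    ∀ i j : Fin 2,
      (∑ p, ∑ q, ∑ k, ∑ l, (h⁻¹ q p) * h k l * T i p k * star (T j q l)) =
        (∑ p, ∑ q, (h⁻¹ q p) * τ p * star (τ q)) * h i j := by
  have hdet : h.det ≠ 0 := ne_of_gt hpd.det_pos
  have hinv : h⁻¹ = (h.det)⁻¹ • !![h 1 1, -h 0 1; -h 1 0, h 0 0] := by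
    rw [Matrix.inv_def, Matrix.adjugate_fin_two, Ring.inverse_eq_inv]
  have hdiag : ∀ i k, T i i k = 0 := by
    intro i k
    linear_combination (hT i i k) / 2
  intro i j
  fin_cases i <;> fin_cases j <;>
    simp only [hinv, Fin.sum_univ_two, hτ, hdiag, hT 1 0, Matrix.smul_apply,
      Matrix.cons_val', Matrix.cons_val_zero, Matrix.cons_val_one, Matrix.head_cons,
      Matrix.head_fin_const, Matrix.empty_val', Matrix.cons_val_fin_one, smul_eq_mul, Fin.mk_zero, Fin.mk_one, Matrix.of_apply,
      star_add, star_mul, star_neg, star_zero, Fin.isValue] <;>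
    ring
end
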